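/- Let A : ℕ → S be an allocation satisfying |f(s)·N − |{k < N : A[k] = s}|| ≤ 1 for all s ∈ S and all N ∈ ℕ, and suppose |S| ≥ 2. Then there exists a constant K > 0 (which may depend on S, f, and A) such that for all integers m ≥ 1 and n ≥ 1, the expected number of bits per symbol EB(n) = (1/m)·Σ_{s_1,…,s_m ∈ S} f(s_1)⋯f(s_m)·(bits(C(s_1⋯s_m, n)) − bits(n)) satisfies |EB(n) − H| ≤ K·(1/m + (1/(m·n))·min{m, (1 − Σ_{s∈S} f(s)²)^{−1}}), where H = −Σ_{s∈S} f(s)·log₂ f(s) is the Shannon entropy. -/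

import Mathlib

open Finset

/-- The number of occurrences of the symbol `s` among the first `N` terms of `A`. -/
def nOcc {S : Type*} [DecidableEq S] (A : ℕ → S) (s : S) (N : ℕ) : ℕ :=
  ((Finset.range N).filter fun k => A k = s).card

/-- `rnk A s n` is the number of occurrences of `s` among `A 0, …, A n`. -/
def rnk {S : Type*} [DecidableEq S] (A : ℕ → S) (s : S) (n : ℕ) : ℕ :=
  ((Finset.range (n + 1)).filter fun k => A k = s).card

/-- `sel A s n` is the index of the `n`-th occurrence of `s` in `A`. -/
noncomputable def sel {S : Type*} [DecidableEq S] (A : ℕ → S) (s : S) (n : ℕ) : ℕ :=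
  sInf {k : ℕ | n ≤ rnk A s k}

/-- Asymmetric-numeral-system encoding of a single symbol. -/
noncomputable def ansEnc {S : Type*} [DecidableEq S] (A : ℕ → S) (s : S) (n : ℕ) : ℕ :=
  sel A s (n + 1)

/-- Asymmetric-numeral-system encoding of a word. -/
noncomputable def ansEncWord {S : Type*} [DecidableEq S] (A : ℕ → S) : List S → ℕ → ℕ
  | [], n => n
  | s :: w, n => ansEnc A s (ansEncWord A w n)

/-- The number of bits of a non-negative integer: `bits 0 = 1`, `bits ℓ = ⌊log₂ ℓ⌋ + 1`. -/
def bits (n : ℕ) : ℕ := Nat.log 2 n + 1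

/-!
Write `x_j` for the state after the last `j` symbols of the word have been encoded. Balance of
`A` gives `f s * C(s, x) = x + O(1)`, so encoding `s` adds `-log₂ f s` to `log₂ x` up to an error
`O(1/x)`, while `bits` and `log₂` differ by less than `1`. Hence
`m * |EB(n) - H| ≤ 1 + O(∑ j, E[1/x_j])`. The point is that `1/x` contracts in expectation: some
symbol always multiplies the state by at least `4/3`, so `∑ s, f s / C(s, x) ≤ G / x` for a `G < 1`
independent of `x`. Thus `E[1/x_j] ≤ G^j / n` and the total error is `O(1 + 1 / ((1 - G) n))`;
the bound follows as `min m (1 - ∑ s, f s ^ 2)⁻¹ ≥ 1`.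
-/

open Real

section

variable {S : Type*}

section Encoding

variable [DecidableEq S] {A : ℕ → S} {s : S} {x : ℕ}

lemma nOcc_le_self (A : ℕ → S) (s : S) (N : ℕ) : nOcc A s N ≤ N :=
  (card_filter_le _ _).trans_eq (card_range N)

lemma lt_nOcc_ansEnc_succ (h : ∃ N, x < nOcc A s N) : x < nOcc A s (ansEnc A s x + 1) := by
  obtain ⟨N, hN⟩ := h
  have hne : {k | x + 1 ≤ rnk A s k}.Nonempty := by
    cases N with
    | zero => simp [nOcc] at hN
    | succ k => exact ⟨k, hN⟩
  exact Nat.sInf_mem hne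

lemma nOcc_ansEnc_le : nOcc A s (ansEnc A s x) ≤ x := by
  cases h : ansEnc A s x with
  | zero => simp [nOcc]
  | succ k =>
    have hk : k ∉ {k | x + 1 ≤ rnk A s k} :=
      Nat.notMem_of_lt_sInf (by rw [ansEnc, sel] at h; omega)
    exact Nat.lt_succ_iff.mp (not_le.mp hk)

lemma le_ansEnc (h : ∃ N, x < nOcc A s N) : x ≤ ansEnc A s x := by
  have := lt_nOcc_ansEnc_succ h
  have := nOcc_le_self A s (ansEnc A s x + 1)
  omega

lemma two_le_ansEnc_one (hs : A 0 ≠ s) (h : ∃ N, 1 < nOcc A s N) : 2 ≤ ansEnc A s 1 := by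
  have hlt := lt_nOcc_ansEnc_succ h
  have hle := le_ansEnc h
  by_contra! hlt2
  rw [show ansEnc A s 1 = 1 by omega] at hlt
  simp [nOcc, Finset.range_add_one, Finset.filter_insert, Finset.filter_singleton, hs] at hlt
  split_ifs at hlt <;> simp at hlt

lemma ansEncWord_ofFn_cons {m : ℕ} (s : S) (v : Fin m → S) (n : ℕ) :
    ansEncWord A (List.ofFn (Fin.cons s v)) n = ansEnc A s (ansEncWord A (List.ofFn v) n) := by
  rw [List.ofFn_cons]
  rfl

lemma le_ansEncWord (henc : ∀ s x, x ≤ ansEnc A s x) (w : List S) (n : ℕ) :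
    n ≤ ansEncWord A w n := by
  induction w with
  | nil => exact le_rfl
  | cons s w ih => exact ih.trans (henc s _)

end Encoding

def IsBalanced [DecidableEq S] (f : S → ℝ) (A : ℕ → S) : Prop :=
  ∀ (s : S) (N : ℕ), |f s * (N : ℝ) - (nOcc A s N : ℝ)| ≤ 1

section Distribution

variable [Fintype S] {f : S → ℝ}

lemma exists_le_half (hsum : ∑ s, f s = 1) (hcard : 2 ≤ Fintype.card S) : ∃ s, f s ≤ 1 / 2 := by
  have : Nonempty S := Fintype.card_pos_iff.mp (by omega)
  by_contra! h
  have hlt := sum_lt_sum_of_nonempty univ_nonempty fun s _ => h s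
  have hcard' : (2 : ℝ) ≤ Fintype.card S := by exact_mod_cast hcard
  simp only [sum_const, card_univ, nsmul_eq_mul, hsum] at hlt
  linarith

lemma lt_one_of_two_le_card (hf0 : ∀ s, 0 < f s) (hsum : ∑ s, f s = 1)
    (hcard : 2 ≤ Fintype.card S) (s : S) : f s < 1 := by
  classical
  obtain ⟨t, hts⟩ := Fintype.exists_ne_of_one_lt_card (by omega) s
  have := sum_le_univ_sum_of_nonneg (s := {t, s}) fun i => (hf0 i).le
  rw [sum_pair hts] at this
  linarith [hf0 t]

lemma sum_sq_lt_one [Nonempty S] (hf0 : ∀ s, 0 < f s) (hf1 : ∀ s, f s < 1)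
    (hsum : ∑ s, f s = 1) : ∑ s, f s ^ 2 < 1 :=
  hsum ▸ sum_lt_sum_of_nonempty univ_nonempty fun s _ => by nlinarith [hf0 s, hf1 s]

lemma one_le_inv_one_sub_sum_sq [Nonempty S] (hf0 : ∀ s, 0 < f s) (hf1 : ∀ s, f s < 1)
    (hsum : ∑ s, f s = 1) : 1 ≤ (1 - ∑ s, f s ^ 2)⁻¹ :=
  (one_le_inv₀ (by linarith [sum_sq_lt_one hf0 hf1 hsum])).mpr
    (by linarith [sum_nonneg fun s (_ : s ∈ univ) => sq_nonneg (f s)])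

end Distribution

lemma Real.abs_log_le_of_abs_sub_one_le {t δ ε : ℝ} (hδ : 0 < δ) (hδ1 : δ ≤ 1) (ht : δ ≤ t)
    (h : |t - 1| ≤ ε) : |log t| ≤ ε / δ := by
  have ht0 : 0 < t := hδ.trans_le ht
  have hε : 0 ≤ ε := (abs_nonneg _).trans h
  obtain ⟨h₁, h₂⟩ := abs_le.mp h
  rw [abs_le]
  constructor
  · have hlog := one_sub_inv_le_log_of_pos ht0
    have hdiv : (1 - t) / t ≤ ε / δ := div_le_div₀ hε (by linarith) hδ ht
    have : 1 - t⁻¹ = -((1 - t) / t) := by field_simp; ring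
    linarith
  · linarith [log_le_sub_one_of_pos ht0, le_div_self hε hδ hδ1]

namespace IsBalanced

variable [DecidableEq S] {f : S → ℝ} {A : ℕ → S} {s : S} {x : ℕ}

lemma exists_lt_nOcc (hA : IsBalanced f A) (hfs : 0 < f s) (x : ℕ) : ∃ N, x < nOcc A s N := by
  obtain ⟨N, hN⟩ := exists_nat_gt ((x + 2) / f s)
  rw [div_lt_iff₀ hfs] at hN
  have := (abs_le.mp (hA s N)).2
  exact ⟨N, by exact_mod_cast (by linarith : (x : ℝ) < nOcc A s N)⟩

lemma le_ansEnc (hA : IsBalanced f A) (hfs : 0 < f s) : x ≤ ansEnc A s x :=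
  _root_.le_ansEnc (hA.exists_lt_nOcc hfs x)

lemma le_mul_ansEnc_add_one (hA : IsBalanced f A) (hfs : 0 < f s) :
    (x : ℝ) ≤ f s * (ansEnc A s x + 1) := by
  have h1 : (x : ℝ) + 1 ≤ nOcc A s (ansEnc A s x + 1) := by
    exact_mod_cast lt_nOcc_ansEnc_succ (hA.exists_lt_nOcc hfs x)
  have h2 := (abs_le.mp (hA s (ansEnc A s x + 1))).1
  push_cast at h2
  linarith

lemma mul_ansEnc_le (hA : IsBalanced f A) : f s * ansEnc A s x ≤ x + 1 := by
  have h1 : (nOcc A s (ansEnc A s x) : ℝ) ≤ x := Nat.cast_le.mpr nOcc_ansEnc_le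
  have h2 := (abs_le.mp (hA s (ansEnc A s x))).2
  linarith

lemma abs_logb_ansEnc_sub_le (hA : IsBalanced f A) (hfs : 0 < f s) (hfs1 : f s < 1) (hx : 1 ≤ x) :
    |logb 2 (ansEnc A s x) - logb 2 x + logb 2 (f s)| ≤ ((1 - f s) * log 2)⁻¹ * (x : ℝ)⁻¹ := by
  have hx0 : (0 : ℝ) < x := by exact_mod_cast hx
  have hx1 : (1 : ℝ) ≤ x := by exact_mod_cast hx
  have ha0 : (0 : ℝ) < ansEnc A s x := hx0.trans_le (by exact_mod_cast hA.le_ansEnc hfs)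
  have hlow := hA.le_mul_ansEnc_add_one (x := x) hfs
  have hup := hA.mul_ansEnc_le (s := s) (x := x)
  set t := f s * ansEnc A s x / x with ht
  have hdev : |t - 1| ≤ (x : ℝ)⁻¹ := by
    rw [abs_le, ht]
    constructor
    · rw [le_sub_iff_add_le, le_div_iff₀ hx0, add_mul, neg_mul, inv_mul_cancel₀ hx0.ne']
      linarith
    · rw [sub_le_iff_le_add, div_le_iff₀ hx0, add_mul, inv_mul_cancel₀ hx0.ne']
      linarith
  have hδ : 1 - f s ≤ t := by
    rw [ht, le_div_iff₀ hx0]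
    nlinarith [mul_le_mul_of_nonneg_left hx1 hfs.le]
  have hlog := Real.abs_log_le_of_abs_sub_one_le (by linarith) (by linarith) hδ hdev
  have hid : logb 2 (ansEnc A s x) - logb 2 x + logb 2 (f s) = log t / log 2 := by
    rw [ht, ← logb, logb_div (by positivity) hx0.ne', logb_mul hfs.ne' ha0.ne']
    ring
  rw [hid, abs_div, abs_of_pos (log_pos one_lt_two), div_le_iff₀ (log_pos one_lt_two)]
  calc |log t| ≤ (x : ℝ)⁻¹ / (1 - f s) := hlog
    _ = ((1 - f s) * log 2)⁻¹ * (x : ℝ)⁻¹ * log 2 := by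
        field_simp

variable [Fintype S]

lemma exists_abs_logb_ansEnc_sub_le (hA : IsBalanced f A) (hf0 : ∀ s, 0 < f s)
    (hf1 : ∀ s, f s < 1) :
    ∃ c, 0 ≤ c ∧ ∀ s x, 1 ≤ x →
      |logb 2 (ansEnc A s x) - logb 2 x + logb 2 (f s)| ≤ c * (x : ℝ)⁻¹ := by
  have hcs (s : S) : 0 ≤ ((1 - f s) * log 2)⁻¹ :=
    inv_nonneg.mpr (mul_nonneg (by linarith [hf1 s]) (log_nonneg one_le_two))
  refine ⟨∑ s, ((1 - f s) * log 2)⁻¹, sum_nonneg fun s _ => hcs s, fun s x hx => ?_⟩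
  refine (hA.abs_logb_ansEnc_sub_le (hf0 s) (hf1 s) hx).trans ?_
  gcongr
  exact single_le_sum (fun t _ => hcs t) (mem_univ s)

lemma exists_four_mul_le_three_mul_ansEnc (hA : IsBalanced f A) (hf0 : ∀ s, 0 < f s)
    (hsum : ∑ s, f s = 1) (hcard : 2 ≤ Fintype.card S) (hx : 1 ≤ x) :
    ∃ s, 4 * x ≤ 3 * ansEnc A s x := by
  rcases hx.eq_or_lt with rfl | hx2
  · obtain ⟨s, hs⟩ := Fintype.exists_ne_of_one_lt_card (by omega) (A 0)
    have := two_le_ansEnc_one hs.symm (hA.exists_lt_nOcc (hf0 s) 1)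
    exact ⟨s, by omega⟩
  · obtain ⟨s, hs⟩ := exists_le_half hsum hcard
    have h := hA.le_mul_ansEnc_add_one (x := x) (hf0 s)
    have hle : 2 * x ≤ ansEnc A s x + 1 := by
      have : (0 : ℝ) ≤ ansEnc A s x + 1 := by positivity
      exact_mod_cast (by nlinarith : (2 * x : ℝ) ≤ ansEnc A s x + 1)
    exact ⟨s, by omega⟩

lemma exists_sum_mul_inv_ansEnc_le (hA : IsBalanced f A) (hf0 : ∀ s, 0 < f s)
    (hsum : ∑ s, f s = 1) (hcard : 2 ≤ Fintype.card S) :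
    ∃ G, 0 ≤ G ∧ G < 1 ∧
      ∀ x, 1 ≤ x → ∑ s, f s * (ansEnc A s x : ℝ)⁻¹ ≤ G * (x : ℝ)⁻¹ := by
  have : Nonempty S := Fintype.card_pos_iff.mp (by omega)
  obtain ⟨s₀, hs₀⟩ := Finite.exists_min f
  have hf1 := lt_one_of_two_le_card hf0 hsum hcard s₀
  refine ⟨1 - f s₀ / 4, by linarith, by linarith [hf0 s₀], fun x hx => ?_⟩
  obtain ⟨s, hs⟩ := hA.exists_four_mul_le_three_mul_ansEnc hf0 hsum hcard hx
  have hx0 : (0 : ℝ) < x := by exact_mod_cast hx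
  have hinvs : (ansEnc A s x : ℝ)⁻¹ ≤ 3 / 4 * (x : ℝ)⁻¹ := by
    have h : (4 * x : ℝ) ≤ 3 * ansEnc A s x := by exact_mod_cast hs
    rw [inv_le_comm₀ (by linarith) (by positivity)]
    field_simp
    linarith
  calc ∑ t, f t * (ansEnc A t x : ℝ)⁻¹
      = f s * (ansEnc A s x : ℝ)⁻¹ + ∑ t ∈ univ.erase s, f t * (ansEnc A t x : ℝ)⁻¹ :=
        (add_sum_erase _ _ (mem_univ s)).symm
    _ ≤ f s * (3 / 4 * (x : ℝ)⁻¹) + ∑ t ∈ univ.erase s, f t * (x : ℝ)⁻¹ := by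
        gcongr with t
        exacts [(hf0 s).le, (hf0 t).le, hA.le_ansEnc (hf0 t)]
    _ = (1 - f s / 4) * (x : ℝ)⁻¹ := by
        rw [← sum_mul, sum_erase_eq_sub (mem_univ s), hsum]
        ring
    _ ≤ (1 - f s₀ / 4) * (x : ℝ)⁻¹ := by
        gcongr
        exact hs₀ s

end IsBalanced

lemma logb_two_lt_natLog_add_one (n : ℕ) : logb 2 n < Nat.log 2 n + 1 := by
  have h := Int.lt_floor_add_one (logb 2 (n : ℝ))
  rwa [show (2 : ℝ) = (2 : ℕ) by norm_num, floor_logb_natCast (by positivity), Int.log_natCast,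
    Int.cast_natCast] at h

lemma abs_bits_sub_bits_sub_logb_lt (a b : ℕ) :
    |((bits a : ℝ) - bits b) - (logb 2 a - logb 2 b)| < 1 := by
  have ha := natLog_le_logb a 2
  have hb := natLog_le_logb b 2
  have ha' := logb_two_lt_natLog_add_one a
  have hb' := logb_two_lt_natLog_add_one b
  push_cast [bits] at ha hb ⊢
  rw [abs_lt]
  constructor <;> linarith

section WordMean

variable [Fintype S] {f : S → ℝ} {m : ℕ}

variable (f) in
def wordMean (m : ℕ) (F : (Fin m → S) → ℝ) : ℝ :=
  ∑ w : Fin m → S, (∏ i, f (w i)) * F w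

lemma wordMean_zero (F : (Fin 0 → S) → ℝ) : wordMean f 0 F = F Fin.elim0 := by
  simp [wordMean, Subsingleton.elim _ (Fin.elim0 : Fin 0 → S)]

lemma wordMean_succ (F : (Fin (m + 1) → S) → ℝ) :
    wordMean f (m + 1) F = wordMean f m fun v => ∑ s, f s * F (Fin.cons s v) := by
  unfold wordMean
  rw [← (Fin.consEquiv fun _ => S).sum_comp, Fintype.sum_prod_type, sum_comm]
  simp [Fin.prod_univ_succ, mul_sum, mul_assoc, mul_left_comm]
  rfl

lemma wordMean_add (F F' : (Fin m → S) → ℝ) :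
    wordMean f m (fun w => F w + F' w) = wordMean f m F + wordMean f m F' := by
  simp [wordMean, mul_add, sum_add_distrib]

lemma wordMean_sub (F F' : (Fin m → S) → ℝ) :
    wordMean f m (fun w => F w - F' w) = wordMean f m F - wordMean f m F' := by
  simp [wordMean, mul_sub, sum_sub_distrib]

lemma wordMean_const_mul (c : ℝ) (F : (Fin m → S) → ℝ) :
    wordMean f m (fun w => c * F w) = c * wordMean f m F := by
  simp [wordMean, mul_sum, mul_left_comm]

lemma wordMean_mono (hf : ∀ s, 0 ≤ f s) {F F' : (Fin m → S) → ℝ} (h : ∀ w, F w ≤ F' w) :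
    wordMean f m F ≤ wordMean f m F' :=
  sum_le_sum fun w _ => mul_le_mul_of_nonneg_left (h w) (prod_nonneg fun _ _ => hf _)

lemma abs_wordMean_le (hf : ∀ s, 0 ≤ f s) (F : (Fin m → S) → ℝ) :
    |wordMean f m F| ≤ wordMean f m fun w => |F w| := by
  refine (abs_sum_le_sum_abs _ _).trans_eq (sum_congr rfl fun w _ => ?_)
  rw [abs_mul, abs_of_nonneg (prod_nonneg fun _ _ => hf _)]

lemma wordMean_const (hsum : ∑ s, f s = 1) (c : ℝ) : wordMean f m (fun _ => c) = c := by
  induction m with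
  | zero => simp [wordMean_zero]
  | succ m ih => simp [wordMean_succ, ← sum_mul, hsum, ih]

lemma wordMean_sum_apply (hsum : ∑ s, f s = 1) (g : S → ℝ) :
    wordMean f m (fun w => ∑ i, g (w i)) = m * ∑ s, f s * g s := by
  induction m with
  | zero => simp [wordMean_zero]
  | succ m ih =>
    simp only [wordMean_succ, Fin.sum_univ_succ, Fin.cons_zero, Fin.cons_succ, mul_add,
      sum_add_distrib, ← sum_mul, hsum, one_mul]
    rw [wordMean_add, wordMean_const hsum, ih]
    push_cast
    ring

end WordMean

section WordEncoding

variable [DecidableEq S] {f : S → ℝ} {A : ℕ → S} {G c : ℝ} {n : ℕ}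

/-- `-∑ i, logb 2 (f (v i))` is the ideal code length of `v`. -/
noncomputable def logExcess (f : S → ℝ) (A : ℕ → S) (n : ℕ) {m : ℕ} (v : Fin m → S) : ℝ :=
  logb 2 (ansEncWord A (List.ofFn v) n) - logb 2 n + ∑ i, logb 2 (f (v i))

lemma logExcess_cons {m : ℕ} (s : S) (v : Fin m → S) :
    logExcess f A n (Fin.cons s v : Fin (m + 1) → S) =
      (logb 2 (ansEnc A s (ansEncWord A (List.ofFn v) n))
          - logb 2 (ansEncWord A (List.ofFn v) n) + logb 2 (f s)) + logExcess f A n v := by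
  simp only [logExcess, ansEncWord_ofFn_cons, Fin.sum_univ_succ, Fin.cons_zero, Fin.cons_succ]
  ring

variable [Fintype S]

lemma wordMean_inv_ansEncWord_le (hf : ∀ s, 0 ≤ f s) (henc : ∀ s x, x ≤ ansEnc A s x)
    (hG0 : 0 ≤ G) (hG : ∀ x, 1 ≤ x → ∑ s, f s * (ansEnc A s x : ℝ)⁻¹ ≤ G * (x : ℝ)⁻¹)
    (hn : 1 ≤ n) (m : ℕ) :
    wordMean f m (fun v => (ansEncWord A (List.ofFn v) n : ℝ)⁻¹) ≤ G ^ m * (n : ℝ)⁻¹ := by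
  induction m with
  | zero => simp [wordMean_zero, ansEncWord]
  | succ m ih =>
    simp only [wordMean_succ, ansEncWord_ofFn_cons]
    calc _ ≤ wordMean f m (fun v => G * (ansEncWord A (List.ofFn v) n : ℝ)⁻¹) :=
          wordMean_mono hf fun v => hG _ (hn.trans (le_ansEncWord henc _ n))
      _ ≤ G * (G ^ m * (n : ℝ)⁻¹) := by
          rw [wordMean_const_mul]
          exact mul_le_mul_of_nonneg_left ih hG0
      _ = G ^ (m + 1) * (n : ℝ)⁻¹ := by ring

lemma wordMean_abs_logExcess_le (hf : ∀ s, 0 ≤ f s) (hsum : ∑ s, f s = 1)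
    (henc : ∀ s x, x ≤ ansEnc A s x)
    (hG0 : 0 ≤ G) (hG : ∀ x, 1 ≤ x → ∑ s, f s * (ansEnc A s x : ℝ)⁻¹ ≤ G * (x : ℝ)⁻¹)
    (hc0 : 0 ≤ c)
    (hc : ∀ s x, 1 ≤ x → |logb 2 (ansEnc A s x) - logb 2 x + logb 2 (f s)| ≤ c * (x : ℝ)⁻¹)
    (hn : 1 ≤ n) (m : ℕ) :
    wordMean f m (fun v => |logExcess f A n v|) ≤ c * (∑ t ∈ range m, G ^ t) * (n : ℝ)⁻¹ := by
  induction m with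
  | zero => simp [wordMean_zero, logExcess, ansEncWord]
  | succ m ih =>
    have hstep (v : Fin m → S) :
        ∑ s, f s * |logExcess f A n (Fin.cons s v : Fin (m + 1) → S)|
          ≤ c * (ansEncWord A (List.ofFn v) n : ℝ)⁻¹ + |logExcess f A n v| := by
      calc _ ≤ ∑ s, f s * (c * (ansEncWord A (List.ofFn v) n : ℝ)⁻¹ + |logExcess f A n v|) := by
            gcongr with s
            · exact hf s
            rw [logExcess_cons]
            exact (abs_add_le _ _).trans
              (add_le_add_left (hc s _ (hn.trans (le_ansEncWord henc _ n))) _)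
        _ = _ := by rw [← sum_mul, hsum, one_mul]
    rw [wordMean_succ]
    calc _ ≤ wordMean f m (fun v =>
              c * (ansEncWord A (List.ofFn v) n : ℝ)⁻¹ + |logExcess f A n v|) :=
          wordMean_mono hf hstep
      _ ≤ c * (G ^ m * (n : ℝ)⁻¹) + c * (∑ t ∈ range m, G ^ t) * (n : ℝ)⁻¹ := by
          rw [wordMean_add, wordMean_const_mul]
          gcongr
          exact wordMean_inv_ansEncWord_le hf henc hG0 hG hn m
      _ = c * (∑ t ∈ range (m + 1), G ^ t) * (n : ℝ)⁻¹ := by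
          rw [sum_range_succ]
          ring

lemma abs_wordMean_bits_sub_le (hf : ∀ s, 0 ≤ f s) (hsum : ∑ s, f s = 1)
    (henc : ∀ s x, x ≤ ansEnc A s x) (hG0 : 0 ≤ G) (hG1 : G < 1)
    (hG : ∀ x, 1 ≤ x → ∑ s, f s * (ansEnc A s x : ℝ)⁻¹ ≤ G * (x : ℝ)⁻¹)
    (hc0 : 0 ≤ c)
    (hc : ∀ s x, 1 ≤ x → |logb 2 (ansEnc A s x) - logb 2 x + logb 2 (f s)| ≤ c * (x : ℝ)⁻¹)
    (hn : 1 ≤ n) (m : ℕ) :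
    |wordMean f m (fun w => (bits (ansEncWord A (List.ofFn w) n) : ℝ) - bits n)
        - m * -∑ s, f s * logb 2 (f s)| ≤ 1 + c / (1 - G) * (n : ℝ)⁻¹ := by
  have hentropy : (m : ℝ) * -∑ s, f s * logb 2 (f s) =
      wordMean f m fun w => -∑ i, logb 2 (f (w i)) := by
    simpa [mul_neg] using (wordMean_sum_apply hsum fun s => -logb 2 (f s)).symm
  have hpoint (w : Fin m → S) :
      |(bits (ansEncWord A (List.ofFn w) n) : ℝ) - bits n - -∑ i, logb 2 (f (w i))|
        ≤ 1 + |logExcess f A n w| := by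
    calc _ = |((bits (ansEncWord A (List.ofFn w) n) : ℝ) - bits n
            - (logb 2 (ansEncWord A (List.ofFn w) n) - logb 2 n)) + logExcess f A n w| := by
          rw [logExcess]
          ring_nf
      _ ≤ _ := (abs_add_le _ _).trans
          (add_le_add_left (abs_bits_sub_bits_sub_logb_lt _ _).le _)
  have hgeom : ∑ t ∈ range m, G ^ t ≤ (1 - G)⁻¹ := by
    have h := geom_sum_Ico_le_of_lt_one (m := 0) (n := m) hG0 hG1
    rwa [← Finset.range_eq_Ico, pow_zero, one_div] at h
  rw [hentropy, ← wordMean_sub]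
  calc _ ≤ wordMean f m (fun w => 1 + |logExcess f A n w|) :=
        (abs_wordMean_le hf _).trans (wordMean_mono hf hpoint)
    _ ≤ 1 + c * (∑ t ∈ range m, G ^ t) * (n : ℝ)⁻¹ := by
        rw [wordMean_add, wordMean_const hsum]
        gcongr
        exact wordMean_abs_logExcess_le hf hsum henc hG0 hG hc0 hc hn m
    _ ≤ 1 + c / (1 - G) * (n : ℝ)⁻¹ := by
        rw [div_eq_mul_inv]
        gcongr

end WordEncoding

lemma abs_one_div_mul_sub_le {E H m n c M : ℝ} (hm : 0 < m) (hn : 0 < n) (hc : 0 ≤ c)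
    (hM : 1 ≤ M) (h : |E - m * H| ≤ 1 + c * n⁻¹) :
    |1 / m * E - H| ≤ (1 + c) * (1 / m + 1 / (m * n) * M) := by
  have hb : 1 / (m * n) ≤ 1 / (m * n) * M := le_mul_of_one_le_right (by positivity) hM
  have hrescale : 1 / m * E - H = m⁻¹ * (E - m * H) := by field_simp
  calc |1 / m * E - H| ≤ m⁻¹ * (1 + c * n⁻¹) := by
        rw [hrescale, abs_mul, abs_of_pos (inv_pos.mpr hm)]
        gcongr
    _ = 1 / m + c * (1 / (m * n)) := by field_simp
    _ ≤ _ := by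
        nlinarith [mul_le_mul_of_nonneg_left hb hc, mul_nonneg hc (one_div_nonneg.mpr hm.le),
          mul_nonneg (by positivity : (0 : ℝ) ≤ 1 / (m * n)) (zero_le_one.trans hM)]

end

theorem stmt_17_general {S : Type*} [Fintype S] [DecidableEq S]
    (f : S → ℝ) (hf0 : ∀ s, 0 < f s)
    (hsum : ∑ s, f s = 1)
    (hcard : 2 ≤ Fintype.card S)
    (A : ℕ → S)
    (hA : ∀ (s : S) (N : ℕ), |f s * (N : ℝ) - (nOcc A s N : ℝ)| ≤ 1) :
    ∃ K : ℝ, 0 < K ∧ ∀ m n : ℕ, 1 ≤ m → 1 ≤ n →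
      |(1 / (m : ℝ)) * ∑ w : Fin m → S, (∏ i, f (w i)) *
            ((bits (ansEncWord A (List.ofFn w) n) : ℝ) - (bits n : ℝ))
          - (-∑ s, f s * Real.logb 2 (f s))|
        ≤ K * (1 / (m : ℝ)
            + 1 / ((m : ℝ) * (n : ℝ)) * min (m : ℝ) (1 - ∑ s, f s ^ 2)⁻¹) := by
  have : Nonempty S := Fintype.card_pos_iff.mp (by omega)
  have hA : IsBalanced f A := hA
  have hf1 := lt_one_of_two_le_card hf0 hsum hcard
  obtain ⟨G, hG0, hG1, hG⟩ := hA.exists_sum_mul_inv_ansEnc_le hf0 hsum hcard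
  obtain ⟨c, hc0, hc⟩ := hA.exists_abs_logb_ansEnc_sub_le hf0 hf1
  have hG1' : 0 < 1 - G := by linarith
  refine ⟨1 + c / (1 - G), by positivity, fun m n hm hn => ?_⟩
  have hM : 1 ≤ min (m : ℝ) (1 - ∑ s, f s ^ 2)⁻¹ :=
    le_min (by exact_mod_cast hm) (one_le_inv_one_sub_sum_sq hf0 hf1 hsum)
  exact abs_one_div_mul_sub_le (by exact_mod_cast hm) (by exact_mod_cast hn) (by positivity) hM
    (abs_wordMean_bits_sub_le (fun s => (hf0 s).le) hsum (fun s _ => hA.le_ansEnc (hf0 s))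
      hG0 hG1 hG hc0 hc hn m)

theorem stmt_17 {S : Type*} [Fintype S] [DecidableEq S]
    (f : S → ℝ) (hf0 : ∀ s, 0 < f s) (hf1 : ∀ s, f s ≤ 1)
    (hsum : ∑ s, f s = 1)
    (hcard : 2 ≤ Fintype.card S)
    (A : ℕ → S)
    (hA : ∀ (s : S) (N : ℕ), |f s * (N : ℝ) - (nOcc A s N : ℝ)| ≤ 1) :
    ∃ K : ℝ, 0 < K ∧ ∀ m n : ℕ, 1 ≤ m → 1 ≤ n →
      |(1 / (m : ℝ)) * ∑ w : Fin m → S, (∏ i, f (w i)) *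
            ((bits (ansEncWord A (List.ofFn w) n) : ℝ) - (bits n : ℝ))
          - (-∑ s, f s * Real.logb 2 (f s))|
        ≤ K * (1 / (m : ℝ)
            + 1 / ((m : ℝ) * (n : ℝ)) * min (m : ℝ) (1 - ∑ s, f s ^ 2)⁻¹) :=
  stmt_17_general f hf0 hsum hcard A hA
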